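/- arXiv:2502.15372 — 3 statements merged into one kernel-verified Lean document; each statement's English description precedes it below -/
import Mathlib

section
/- For probability densities p, p̂, q on a measurable space, and a measurable function f with sup |f(x)| ≤ 1, the bias of the plug-in importance-weighted estimator satisfies |E_{x∼p_tr}[(p̂_te(x)/p̂_tr(x))·f(x)] − E_{x∼p_te}[f(x)]| ≤ E_{x∼p̂_te}|p_tr(x)/p̂_tr(x) − 1| + d_TV(p̂_te, p_te). -/
open MeasureTheory

/-- Bias bound for the plug-in importance-weighted estimator:
`|E_{x∼p_tr}[(p̂_te/p̂_tr)·f] − E_{x∼p_te}[f]| ≤ E_{x∼p̂_te}|p_tr/p̂_tr − 1| + d_TV(p̂_te, p_te)`. -/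
theorem stmt_0 {α : Type*} [MeasurableSpace α] (μ : Measure α)
    (ptr pte phtr phte : α → ℝ) (f : α → ℝ)
    (hptr_nn : ∀ x, 0 ≤ ptr x) (hpte_nn : ∀ x, 0 ≤ pte x)
    (hphtr_pos : ∀ x, 0 < phtr x) (hphte_nn : ∀ x, 0 ≤ phte x)
    (hptr1 : ∫ x, ptr x ∂μ = 1) (hpte1 : ∫ x, pte x ∂μ = 1)
    (hphtr1 : ∫ x, phtr x ∂μ = 1) (hphte1 : ∫ x, phte x ∂μ = 1)
    (hf_meas : Measurable f) (hf_bd : ∀ x, |f x| ≤ 1)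
    (hInt1 : Integrable (fun x => phte x / phtr x * f x * ptr x) μ)
    (hInt2 : Integrable (fun x => f x * pte x) μ)
    (hInt3 : Integrable (fun x => |ptr x / phtr x - 1| * phte x) μ)
    (hInt4 : Integrable (fun x => |phte x - pte x|) μ) :
    |(∫ x, phte x / phtr x * f x * ptr x ∂μ) - ∫ x, f x * pte x ∂μ|
      ≤ (∫ x, |ptr x / phtr x - 1| * phte x ∂μ) + ∫ x, |phte x - pte x| ∂μ := by
  have key : ∀ x, |phte x / phtr x * f x * ptr x - f x * pte x|
      ≤ |ptr x / phtr x - 1| * phte x + |phte x - pte x| := by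
    intro x
    have hne : phtr x ≠ 0 := (hphtr_pos x).ne'
    have h1 : phte x / phtr x * f x * ptr x - f x * pte x
        = f x * ((ptr x / phtr x - 1) * phte x) + f x * (phte x - pte x) := by
      field_simp
      ring
    rw [h1]
    calc |f x * ((ptr x / phtr x - 1) * phte x) + f x * (phte x - pte x)|
        ≤ |f x * ((ptr x / phtr x - 1) * phte x)| + |f x * (phte x - pte x)| :=
          abs_add_le _ _
      _ = |f x| * (|ptr x / phtr x - 1| * phte x) + |f x| * |phte x - pte x| := by
          rw [abs_mul, abs_mul, abs_mul, abs_of_nonneg (hphte_nn x)]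
      _ ≤ 1 * (|ptr x / phtr x - 1| * phte x) + 1 * |phte x - pte x| := by
          gcongr <;> first | exact mul_nonneg (abs_nonneg _) (hphte_nn x) | exact hf_bd x
      _ = |ptr x / phtr x - 1| * phte x + |phte x - pte x| := by ring
  rw [← integral_sub hInt1 hInt2]
  calc |∫ x, (phte x / phtr x * f x * ptr x - f x * pte x) ∂μ|
      ≤ ∫ x, |phte x / phtr x * f x * ptr x - f x * pte x| ∂μ := by
        simpa [Real.norm_eq_abs] using
          norm_integral_le_integral_norm (fun x => phte x / phtr x * f x * ptr x - f x * pte x)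
    _ ≤ ∫ x, (|ptr x / phtr x - 1| * phte x + |phte x - pte x|) ∂μ := by
        exact integral_mono (hInt1.sub hInt2).abs (hInt3.add hInt4) key
    _ = (∫ x, |ptr x / phtr x - 1| * phte x ∂μ) + ∫ x, |phte x - pte x| ∂μ :=
        integral_add hInt3 hInt4
end

section
/- Let Z be a real random variable (Z = ln(p(x)/p̂(x)) for x ∼ q) with mean μ = E[Z], and suppose Z is (σ, 1/2)-subexponential with σ ≤ O(1) and μ ≤ O(1). Then (E_{x∼q}|p(x)/p̂(x) − 1|²)^{1/2} ≤ C·(μ + σ) for an absolute constant C. -/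
/-!
Pointwise `(e^z - 1)^2 = e^{2z} - 2e^z + 1 ≤ e^{2z} - 1 - 2z`, so the second moment of `e^Z - 1`
is at most `E[e^{2Z}] - 1 - 2μ`. The moment generating function bound at `λ = 2` gives
`E[e^{2Z}] ≤ e^{2μ + 2σ²}`, and `e^t - 1 - t ≤ t² e^t` with `t = 2μ + 2σ² ≤ 2(μ + σ)` makes
`e^{2μ + 2σ²} - 1 - 2μ` quadratic in `μ + σ` on the bounded range of the parameters.
-/

open MeasureTheory Real

lemma Real.exp_sub_one_sub_le_sq_mul_exp {x : ℝ} (hx : -1 ≤ x) :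
    exp x - 1 - x ≤ x ^ 2 * exp x := by
  -- after multiplying by `e^{-x}` this is `1 - (1 + x) e^{-x} ≤ 1 - (1 + x)(1 - x)`
  have hneg : (1 + x) * (1 - x) ≤ (1 + x) * exp (-x) := by
    gcongr
    · linarith
    · linarith [add_one_le_exp (-x)]
  have hinv : exp (-x) * exp x = 1 := by rw [← exp_add, neg_add_cancel, exp_zero]
  nlinarith [exp_pos x]

lemma Real.exp_sub_one_sq_le (z : ℝ) : (exp z - 1) ^ 2 ≤ exp (2 * z) - 1 - 2 * z := by
  rw [two_mul, exp_add]
  nlinarith [add_one_le_exp z]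

lemma Real.exp_two_mul_le (z : ℝ) : exp (2 * z) ≤ 2 * (exp z - 1) ^ 2 + 2 := by
  rw [two_mul, exp_add]
  nlinarith [sq_nonneg (exp z - 2)]

lemma exp_two_mul_add_sub_one_sub_le_sq {μ σ : ℝ} (hμ0 : 0 ≤ μ) (hμ1 : μ ≤ 1) (hσ0 : 0 ≤ σ)
    (hσ1 : σ ≤ 1) :
    exp (2 * μ + 2 * σ ^ 2) - 1 - 2 * μ ≤ (3 * exp 2 * (μ + σ)) ^ 2 := by
  set t := 2 * μ + 2 * σ ^ 2
  have ht0 : 0 ≤ t := by positivity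
  have ht : t ≤ 2 * (μ + σ) := by nlinarith
  have hexp : exp t ≤ exp 2 ^ 2 :=
    calc exp t ≤ exp (2 + 2) := exp_le_exp.2 (by linarith)
      _ = exp 2 ^ 2 := by rw [exp_add, sq]
  have htaylor := exp_sub_one_sub_le_sq_mul_exp (x := t) (by linarith)
  have hsq : t ^ 2 * exp t ≤ 4 * (μ + σ) ^ 2 * exp 2 ^ 2 := by
    calc t ^ 2 * exp t ≤ (2 * (μ + σ)) ^ 2 * exp 2 ^ 2 := by gcongr
      _ = 4 * (μ + σ) ^ 2 * exp 2 ^ 2 := by ring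
  have he : 1 ≤ exp 2 ^ 2 := one_le_pow₀ (one_le_exp (by norm_num))
  nlinarith [mul_le_mul_of_nonneg_left he (sq_nonneg (μ + σ))]

section

variable {Ω : Type*} [MeasurableSpace Ω] {q : Measure Ω} {Z : Ω → ℝ}

lemma integrable_exp_two_mul_of_integrable_exp_sub_one_sq [IsFiniteMeasure q]
    (hZ : AEStronglyMeasurable Z q) (h : Integrable (fun x => (exp (Z x) - 1) ^ 2) q) :
    Integrable (fun x => exp (2 * Z x)) q := by
  refine ((h.const_mul 2).add (integrable_const 2)).mono' ?_ ?_
  · exact continuous_exp.comp_aestronglyMeasurable (hZ.const_mul 2)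
  · filter_upwards with x
    rw [norm_of_nonneg (exp_pos _).le]
    exact exp_two_mul_le (Z x)

lemma integral_exp_sub_one_sq_le [IsProbabilityMeasure q] (hZ : Integrable Z q)
    (h : Integrable (fun x => (exp (Z x) - 1) ^ 2) q) :
    ∫ x, (exp (Z x) - 1) ^ 2 ∂q ≤ ∫ x, exp (2 * Z x) ∂q - 1 - 2 * ∫ x, Z x ∂q := by
  have h2 := integrable_exp_two_mul_of_integrable_exp_sub_one_sq hZ.aestronglyMeasurable h
  have h21 : Integrable (fun x => exp (2 * Z x) - 1) q := h2.sub (integrable_const 1)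
  calc ∫ x, (exp (Z x) - 1) ^ 2 ∂q ≤ ∫ x, (exp (2 * Z x) - 1 - 2 * Z x) ∂q :=
        integral_mono h (h21.sub (hZ.const_mul 2)) fun x => exp_sub_one_sq_le (Z x)
    _ = ∫ x, exp (2 * Z x) ∂q - 1 - 2 * ∫ x, Z x ∂q := by
        rw [integral_sub h21 (hZ.const_mul 2), integral_sub h2 (integrable_const 1),
          integral_const_mul, integral_const]
        simp

lemma integral_exp_mul_eq (t c : ℝ) :
    ∫ x, exp (t * Z x) ∂q = exp (t * c) * ∫ x, exp (t * (Z x - c)) ∂q := by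
  rw [← integral_const_mul]
  congr 1 with x
  rw [← exp_add]
  congr 1
  ring

end

/-- If `Z = ln(p(x)/p̂(x))` for `x ∼ q` has mean `μ ≤ O(1)` and is `(σ, 1/2)`-subexponential
with `σ ≤ O(1)`, then `(E_{x∼q}|p(x)/p̂(x) − 1|²)^{1/2} ≤ C·(μ + σ)` for an absolute constant. -/
theorem stmt_1 :
    ∃ C : ℝ, 0 < C ∧
      ∀ (Ω : Type) (_ : MeasurableSpace Ω) (q : Measure Ω), IsProbabilityMeasure q →
        ∀ (Z : Ω → ℝ) (μZ σ : ℝ),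
          Integrable Z q →
          μZ = ∫ x, Z x ∂q →
          0 ≤ μZ → μZ ≤ 1 →
          0 ≤ σ → σ ≤ 1 →
          (∀ lam : ℝ, |lam| ≤ 2 →
            ∫ x, Real.exp (lam * (Z x - μZ)) ∂q ≤ Real.exp (lam ^ 2 * σ ^ 2 / 2)) →
          Real.sqrt (∫ x, (Real.exp (Z x) - 1) ^ 2 ∂q) ≤ C * (μZ + σ) := by
  refine ⟨3 * exp 2, by positivity, ?_⟩
  intro Ω _ q _ Z μZ σ hZ hμ hμ0 hμ1 hσ0 hσ1 hmgf
  by_cases hsq : Integrable (fun x => (exp (Z x) - 1) ^ 2) q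
  · have hmgf2 : ∫ x, exp (2 * Z x) ∂q ≤ exp (2 * μZ + 2 * σ ^ 2) := by
      rw [integral_exp_mul_eq 2 μZ, exp_add]
      gcongr
      exact (hmgf 2 (by norm_num)).trans_eq (by ring_nf)
    calc √(∫ x, (exp (Z x) - 1) ^ 2 ∂q)
        ≤ √((3 * exp 2 * (μZ + σ)) ^ 2) := by
          gcongr
          linarith [integral_exp_sub_one_sq_le hZ hsq,
            exp_two_mul_add_sub_one_sub_le_sq hμ0 hμ1 hσ0 hσ1]
      _ = 3 * exp 2 * (μZ + σ) := sqrt_sq (by positivity)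
  · rw [integral_undef hsq, sqrt_zero]
    positivity
end

section
/- Let p_tr, p_te be probability distributions, f a function bounded by 1 in absolute value, and S a measurable set with p_te(S) ≥ 1−ε and p_tr(S) ≥ 1−ε. Let p̂_tr and p̂_te be probability densities with support(p̂_te) ⊆ support(p̂_tr) ⊆ S and p̂_te(x)/p̂_tr(x) ≤ B for all x ∈ S. Then |E_{x∼p_tr}[(p̂_te(x)/p̂_tr(x))f(x)] − E_{x∼p_te}[f(x)]| ≤ B·d_TV(p_tr, p̂_tr) + d_TV(p_te, p̂_te). -/
open MeasureTheory

/-!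
Write `w = p̂_te / p̂_tr`. Since `support p̂_te ⊆ support p̂_tr`, `w * p̂_tr = p̂_te`, so pointwise
`w f p_tr - f p_te = w f (p_tr - p̂_tr) + f (p̂_te - p_te)`.
The support and ratio hypotheses give `0 ≤ w ≤ B` everywhere, and `|f| ≤ 1`, so the integrand is
bounded by `B |p_tr - p̂_tr| + |p_te - p̂_te|`; integrate.
-/

lemma abs_weight_mul_sub_le {w f a a' b b' B : ℝ} (hw : |w| ≤ B) (hf : |f| ≤ 1)
    (hcancel : w * a' = b') :
    |w * f * a - f * b| ≤ B * |a - a'| + |b - b'| := by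
  have hsplit : w * f * a - f * b = w * f * (a - a') + f * (b' - b) := by
    linear_combination f * hcancel
  have hB : 0 ≤ B := (abs_nonneg w).trans hw
  calc |w * f * a - f * b| ≤ |w| * |f| * |a - a'| + |f| * |b - b'| := by
        rw [hsplit, abs_sub_comm b b', ← abs_mul, ← abs_mul, ← abs_mul]
        exact abs_add_le _ _
    _ ≤ B * 1 * |a - a'| + 1 * |b - b'| := by gcongr
    _ = B * |a - a'| + |b - b'| := by ring

theorem stmt_5_general {α : Type*} [MeasurableSpace α] (μ : Measure α)
    (ptr pte phtr phte : α → ℝ) (f : α → ℝ) (S : Set α)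
    (B : ℝ) (hB : 0 < B)
    (hphtr_nn : ∀ x, 0 ≤ phtr x) (hphte_nn : ∀ x, 0 ≤ phte x)
    (hsupp_te_tr : ∀ x, phte x ≠ 0 → phtr x ≠ 0)
    (hsupp_tr_S : ∀ x ∉ S, phtr x = 0)
    (hratio : ∀ x ∈ S, phte x ≤ B * phtr x)
    (hf_bd : ∀ x, |f x| ≤ 1)
    (hInt1 : Integrable (fun x => phte x / phtr x * f x * ptr x) μ)
    (hInt2 : Integrable (fun x => f x * pte x) μ)
    (hInt3 : Integrable (fun x => |ptr x - phtr x|) μ)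
    (hInt4 : Integrable (fun x => |pte x - phte x|) μ) :
    |(∫ x, phte x / phtr x * f x * ptr x ∂μ) - ∫ x, f x * pte x ∂μ|
      ≤ B * (∫ x, |ptr x - phtr x| ∂μ) + ∫ x, |pte x - phte x| ∂μ := by
  have hweight : ∀ x, |phte x / phtr x| ≤ B := by
    intro x
    rw [abs_of_nonneg (div_nonneg (hphte_nn x) (hphtr_nn x))]
    by_cases hx : x ∈ S
    · exact div_le_of_le_mul₀ (hphtr_nn x) hB.le (hratio x hx)
    · simp [hsupp_tr_S x hx, hB.le]
  have hcancel : ∀ x, phte x / phtr x * phtr x = phte x := fun x =>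
    div_mul_cancel_of_imp fun h => by_contra fun hne => hsupp_te_tr x hne h
  have hbound := (hInt3.const_mul B).add hInt4
  calc |(∫ x, phte x / phtr x * f x * ptr x ∂μ) - ∫ x, f x * pte x ∂μ|
      = ‖∫ x, (phte x / phtr x * f x * ptr x - f x * pte x) ∂μ‖ := by
        rw [integral_sub hInt1 hInt2, Real.norm_eq_abs]
    _ ≤ ∫ x, (B * |ptr x - phtr x| + |pte x - phte x|) ∂μ :=
        norm_integral_le_of_norm_le hbound <| .of_forall fun x =>
          abs_weight_mul_sub_le (hweight x) (hf_bd x) (hcancel x)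
    _ = B * (∫ x, |ptr x - phtr x| ∂μ) + ∫ x, |pte x - phte x| ∂μ := by
        rw [integral_add (hInt3.const_mul B) hInt4, integral_const_mul]

/-- Truncated importance-weighting bias bound: if `p̂_te, p̂_tr` are supported in a set `S`
of mass `≥ 1−ε` under both `p_tr` and `p_te`, with `p̂_te/p̂_tr ≤ B` on `S`, then
`|E_{p_tr}[(p̂_te/p̂_tr)f] − E_{p_te}[f]| ≤ B·d_TV(p_tr, p̂_tr) + d_TV(p_te, p̂_te)`. -/
theorem stmt_5 {α : Type*} [MeasurableSpace α] (μ : Measure α)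
    (ptr pte phtr phte : α → ℝ) (f : α → ℝ) (S : Set α) (hS : MeasurableSet S)
    (ε B : ℝ) (hε : 0 ≤ ε) (hB : 0 < B)
    (hptr_nn : ∀ x, 0 ≤ ptr x) (hpte_nn : ∀ x, 0 ≤ pte x)
    (hphtr_nn : ∀ x, 0 ≤ phtr x) (hphte_nn : ∀ x, 0 ≤ phte x)
    (hptr1 : ∫ x, ptr x ∂μ = 1) (hpte1 : ∫ x, pte x ∂μ = 1)
    (hphtr1 : ∫ x, phtr x ∂μ = 1) (hphte1 : ∫ x, phte x ∂μ = 1)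
    (hpteS : 1 - ε ≤ ∫ x in S, pte x ∂μ) (hptrS : 1 - ε ≤ ∫ x in S, ptr x ∂μ)
    (hsupp_te_tr : ∀ x, phte x ≠ 0 → phtr x ≠ 0)
    (hsupp_tr_S : ∀ x ∉ S, phtr x = 0)
    (hratio : ∀ x ∈ S, phte x ≤ B * phtr x)
    (hf_bd : ∀ x, |f x| ≤ 1)
    (hInt1 : Integrable (fun x => phte x / phtr x * f x * ptr x) μ)
    (hInt2 : Integrable (fun x => f x * pte x) μ)
    (hInt3 : Integrable (fun x => |ptr x - phtr x|) μ)
    (hInt4 : Integrable (fun x => |pte x - phte x|) μ) :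
    |(∫ x, phte x / phtr x * f x * ptr x ∂μ) - ∫ x, f x * pte x ∂μ|
      ≤ B * (∫ x, |ptr x - phtr x| ∂μ) + ∫ x, |pte x - phte x| ∂μ :=
  stmt_5_general μ ptr pte phtr phte f S B hB hphtr_nn hphte_nn hsupp_te_tr hsupp_tr_S hratio hf_bd
    hInt1 hInt2 hInt3 hInt4
end
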